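/- Let τ : E → E and τ_B : B → B be involutions with π ∘ τ = τ_B ∘ π for a submersion π : E → B. Suppose a is a two-form on E with τ*a = −a, the fiberwise restriction of a is nondegenerate, and J is the unique almost complex structure that restricts to J_F on fibers, preserves the a-orthogonal complement H = (TF)^{⊥a} of the vertical bundle, and makes π (J, J_B)-holomorphic. If τ is fiberwise anti-holomorphic (dτ ∘ J_F = −J_F ∘ dτ on TF) and τ_B is anti-holomorphic on B, then dτ(H) = H and τ*J = −J. -/
import Mathlib


/-- Linear model of the key step of the Arnold–Givental argument: if `D = dτ`
anti-preserves the coupling form `a` (`τ*a = -a`), covers an anti-holomorphic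
base map, preserves the vertical subspace and is fiberwise anti-holomorphic,
then `D` preserves the `a`-orthogonal horizontal subspace `H` of the vertical
space, and the unique adapted complex structure `J` satisfies `τ*J = -J`. -/
theorem stmt13 (V W : Type*) [AddCommGroup V] [Module ℝ V] [AddCommGroup W] [Module ℝ W]
    (a : (V × W) →ₗ[ℝ] (V × W) →ₗ[ℝ] ℝ)
    (halt : ∀ p : V × W, a p p = 0)
    (hnd : ∀ v : V, (∀ v' : V, a (v, 0) (v', 0) = 0) → v = 0)
    (JF : V →ₗ[ℝ] V) (JB : W →ₗ[ℝ] W)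
    (hJF2 : ∀ v, JF (JF v) = -v) (hJB2 : ∀ w, JB (JB w) = -w)
    (J : (V × W) →ₗ[ℝ] (V × W))
    (hJvert : ∀ v : V, J (v, 0) = (JF v, 0))
    (hJbase : ∀ p : V × W, (J p).2 = JB p.2)
    (hJH : ∀ p : V × W, (∀ v : V, a p (v, 0) = 0) → (∀ v : V, a (J p) (v, 0) = 0))
    (hJ2 : ∀ p, J (J p) = -p)
    (huniq : ∀ J' : (V × W) →ₗ[ℝ] (V × W),
      (∀ v : V, J' (v, 0) = (JF v, 0)) →
      (∀ p : V × W, (J' p).2 = JB p.2) →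
      (∀ p : V × W, (∀ v : V, a p (v, 0) = 0) → (∀ v : V, a (J' p) (v, 0) = 0)) →
      (∀ p, J' (J' p) = -p) → J' = J)
    (D : (V × W) ≃ₗ[ℝ] (V × W)) (DV : V →ₗ[ℝ] V) (DB : W →ₗ[ℝ] W)
    (hDvert : ∀ v : V, D (v, 0) = (DV v, 0))
    (hDbase : ∀ p : V × W, (D p).2 = DB p.2)
    (hDinv : ∀ p : V × W, D (D p) = p)
    (hDa : ∀ p q : V × W, a (D p) (D q) = -a p q)
    (hDVanti : ∀ v, DV (JF v) = -JF (DV v))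
    (hDBanti : ∀ w, DB (JB w) = -JB (DB w)) :
    (∀ p : V × W, (∀ v : V, a p (v, 0) = 0) → (∀ v : V, a (D p) (v, 0) = 0)) ∧
    (∀ p : V × W, D (J (D p)) = -J p) := by
  have hDV2 : ∀ v : V, DV (DV v) = v := by
    intro v
    have h := hDinv (v, 0)
    rw [hDvert v, hDvert (DV v)] at h
    exact congrArg Prod.fst h
  have hDB2 : ∀ w : W, DB (DB w) = w := by
    intro w
    have h := congrArg Prod.snd (hDinv (0, w))
    rw [hDbase (D (0, w)), hDbase (0, w)] at h
    exact h
  have hH : ∀ p : V × W, (∀ v : V, a p (v, 0) = 0) → (∀ v : V, a (D p) (v, 0) = 0) := by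
    intro p hp v
    have : ((v : V), (0 : W)) = D (DV v, 0) := by rw [hDvert, hDV2]
    rw [this, hDa, hp, neg_zero]
  refine ⟨hH, ?_⟩
  set J' : (V × W) →ₗ[ℝ] (V × W) := -(D.toLinearMap ∘ₗ J ∘ₗ D.toLinearMap) with hJ'
  have hJ'app : ∀ p, J' p = -(D (J (D p))) := fun p => rfl
  have h1 : ∀ v : V, J' (v, 0) = (JF v, 0) := by
    intro v
    rw [hJ'app, hDvert, hJvert, hDvert, hDVanti, hDV2]
    simp
  have h2 : ∀ p : V × W, (J' p).2 = JB p.2 := by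
    intro p
    rw [hJ'app]
    have : (D (J (D p))).2 = DB (J (D p)).2 := hDbase _
    rw [Prod.snd_neg, this, hJbase, hDbase, hDBanti, hDB2]
    simp
  have h3 : ∀ p : V × W, (∀ v : V, a p (v, 0) = 0) → (∀ v : V, a (J' p) (v, 0) = 0) := by
    intro p hp v
    rw [hJ'app, map_neg, LinearMap.neg_apply]
    have : ((v : V), (0 : W)) = D (DV v, 0) := by rw [hDvert, hDV2]
    rw [this, hDa, hJH (D p) (hH p hp) (DV v)]
    simp
  have h4 : ∀ p, J' (J' p) = -p := by
    intro p
    rw [hJ'app, hJ'app, map_neg, map_neg, map_neg, hDinv, hJ2, map_neg, hDinv]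
    simp
  have := huniq J' h1 h2 h3 h4
  intro p
  have hp : J' p = J p := by rw [this]
  rw [hJ'app] at hp
  exact neg_eq_iff_eq_neg.mp hp
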